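/- arXiv:2112.11977 — 7 statements merged into one kernel-verified Lean document; each statement's English description precedes it below -/
import Mathlib

section
/- Let A be an associative algebra with unit 1, M an A-bimodule, and r = Σᵢ uᵢ ⊗ vᵢ ∈ A ⊗ A. Define Δ_r : A → A ⊗ A by Δ_r(a) = Σᵢ (a·uᵢ ⊗ vᵢ − uᵢ ⊗ vᵢ·a) − λ(a ⊗ 1). Then Δ_r is coassociative, i.e. (Δ_r ⊗ id)∘Δ_r = (id ⊗ Δ_r)∘Δ_r, if and only if the element r₁₃r₁₂ − r₁₂r₂₃ + r₂₃r₁₃ − λ r₁₃ ∈ A ⊗ A ⊗ A is A-invariant, where a·w = w·a for all a ∈ A. -/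
open TensorProduct BigOperators

/-- The principal derivation `Δ_r(a) = Σᵢ (a uᵢ ⊗ vᵢ − uᵢ ⊗ vᵢ a) − λ (a ⊗ 1)`. -/
noncomputable def principalDeriv {k A ι : Type*} [Field k] [Ring A] [Algebra k A]
    [Fintype ι] (lam : k) (u v : ι → A) : A →ₗ[k] A ⊗[k] A :=
  (∑ i, ((TensorProduct.mk k A A).flip (v i)).comp (LinearMap.mulRight k (u i)))
    - (∑ i, (TensorProduct.mk k A A (u i)).comp (LinearMap.mulLeft k (v i)))
    - lam • ((TensorProduct.mk k A A).flip (1 : A))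

/-- `r₁₂ = Σᵢ uᵢ ⊗ vᵢ ⊗ 1` in `(A ⊗ A) ⊗ A`. -/
noncomputable def r12 {k A ι : Type*} [Field k] [Ring A] [Algebra k A] [Fintype ι]
    (u v : ι → A) : (A ⊗[k] A) ⊗[k] A :=
  ∑ i, ((u i) ⊗ₜ[k] (v i)) ⊗ₜ[k] (1 : A)

/-- `r₁₃ = Σᵢ uᵢ ⊗ 1 ⊗ vᵢ`. -/
noncomputable def r13 {k A ι : Type*} [Field k] [Ring A] [Algebra k A] [Fintype ι]
    (u v : ι → A) : (A ⊗[k] A) ⊗[k] A :=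
  ∑ i, ((u i) ⊗ₜ[k] (1 : A)) ⊗ₜ[k] (v i)

/-- `r₂₃ = Σᵢ 1 ⊗ uᵢ ⊗ vᵢ`. -/
noncomputable def r23 {k A ι : Type*} [Field k] [Ring A] [Algebra k A] [Fintype ι]
    (u v : ι → A) : (A ⊗[k] A) ⊗[k] A :=
  ∑ i, ((1 : A) ⊗ₜ[k] (u i)) ⊗ₜ[k] (v i)

/-- `r₁₃r₁₂ − r₁₂r₂₃ + r₂₃r₁₃ − λ r₁₃`, the obstruction element of the weighted
associative Yang–Baxter equation. -/
noncomputable def waybElem {k A ι : Type*} [Field k] [Ring A] [Algebra k A] [Fintype ι]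
    (lam : k) (u v : ι → A) : (A ⊗[k] A) ⊗[k] A :=
  r13 u v * r12 u v - r12 u v * r23 u v + r23 u v * r13 u v - lam • r13 u v

set_option maxHeartbeats 1000000 in
set_option synthInstance.maxHeartbeats 400000 in
theorem key {k A ι : Type*} [Field k] [Ring A] [Algebra k A] [Fintype ι]
    (lam : k) (u v : ι → A) (a : A) :
    (LinearMap.rTensor A (principalDeriv lam u v)) (principalDeriv lam u v a)
      - (TensorProduct.assoc k A A A).symm
          ((LinearMap.lTensor A (principalDeriv lam u v)) (principalDeriv lam u v a))
    = ((a ⊗ₜ[k] (1 : A)) ⊗ₜ[k] (1 : A)) * waybElem lam u v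
        - waybElem lam u v * (((1 : A) ⊗ₜ[k] (1 : A)) ⊗ₜ[k] a) := by
  simp only [principalDeriv, waybElem, r12, r13, r23,
    LinearMap.sub_apply, LinearMap.sum_apply, LinearMap.smul_apply, LinearMap.comp_apply,
    LinearMap.mulRight_apply, LinearMap.mulLeft_apply, TensorProduct.mk_apply,
    LinearMap.flip_apply, map_sum, map_sub, map_smul,
    LinearMap.rTensor_tmul, LinearMap.lTensor_tmul, TensorProduct.assoc_symm_tmul,
    TensorProduct.sub_tmul, TensorProduct.sum_tmul, TensorProduct.smul_tmul',
    TensorProduct.tmul_sub, TensorProduct.tmul_sum, TensorProduct.tmul_smul,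
    Finset.sum_mul, Finset.mul_sum, Algebra.TensorProduct.tmul_mul_tmul,
    smul_mul_assoc, mul_smul_comm, mul_one, one_mul, mul_assoc,
    sub_mul, mul_sub, mul_add, add_mul, smul_sub, Finset.smul_sum, smul_smul]
  have h1 : ∑ x : ι, ∑ j : ι, ((a * (u x * u j)) ⊗ₜ[k] v j) ⊗ₜ[k] v x
      = ∑ x : ι, ∑ i : ι, ((a * (u i * u x)) ⊗ₜ[k] v x) ⊗ₜ[k] v i := Finset.sum_comm
  have h2 : ∑ x : ι, ∑ j : ι, (u j ⊗ₜ[k] (v j * (a * u x))) ⊗ₜ[k] v x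
      = ∑ x : ι, ∑ j : ι, (u x ⊗ₜ[k] (v x * (a * u j))) ⊗ₜ[k] v j := Finset.sum_comm
  have h4 : ∑ x : ι, ∑ j : ι, ((u x * u j) ⊗ₜ[k] v j) ⊗ₜ[k] (v x * a)
      = ∑ x : ι, ∑ i : ι, ((u i * u x) ⊗ₜ[k] v x) ⊗ₜ[k] (v i * a) := Finset.sum_comm
  have h10 : ∑ x : ι, ∑ j : ι, ((a * u x) ⊗ₜ[k] (v x * u j)) ⊗ₜ[k] v j
      = ∑ x : ι, ∑ i : ι, ((a * u i) ⊗ₜ[k] (v i * u x)) ⊗ₜ[k] v x := Finset.sum_comm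
  simp only [Finset.sum_sub_distrib]
  rw [h1, h2, h4, h10]
  abel


/-- The principal derivation `Δ_r` is coassociative iff
`r₁₃r₁₂ − r₁₂r₂₃ + r₂₃r₁₃ − λr₁₃` is `A`-invariant for the bimodule structure
`a·(x⊗y⊗z) = ax⊗y⊗z`, `(x⊗y⊗z)·b = x⊗y⊗zb`. -/
theorem stmt0 {k A ι : Type*} [Field k] [Ring A] [Algebra k A] [Fintype ι]
    (lam : k) (u v : ι → A) :
    (∀ a : A,
        (TensorProduct.assoc k A A A)
            ((LinearMap.rTensor A (principalDeriv lam u v)) (principalDeriv lam u v a))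
          = (LinearMap.lTensor A (principalDeriv lam u v)) (principalDeriv lam u v a))
      ↔ (∀ a : A,
          ((a ⊗ₜ[k] (1 : A)) ⊗ₜ[k] (1 : A)) * waybElem lam u v
            = waybElem lam u v * (((1 : A) ⊗ₜ[k] (1 : A)) ⊗ₜ[k] a)) := by
  refine forall_congr' fun a => ?_
  rw [← LinearEquiv.eq_symm_apply, ← sub_eq_zero, key lam u v a, sub_eq_zero]
end

section
/- Let (A, ·, 1, r) be a quasitriangular infinitesimal bialgebra of weight λ, i.e. r = Σᵢ uᵢ ⊗ vᵢ ∈ A ⊗ A satisfies r₁₃r₁₂ − r₁₂r₂₃ + r₂₃r₁₃ − λr₁₃ = 0, with Δ(a) = a·r − r·a − λ(a ⊗ 1). Then (Δ ⊗ id)(r) = −r₂₃r₁₃ and (id ⊗ Δ)(r) = r₁₃r₁₂ − λ(r₁₃ + r₁₂). -/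
open TensorProduct BigOperators

/-- For a quasitriangular infinitesimal bialgebra of weight `λ` (i.e. `r` satisfies
the weighted associative Yang–Baxter equation), one has
`(Δ ⊗ id)(r) = −r₂₃r₁₃` and `(id ⊗ Δ)(r) = r₁₃r₁₂ − λ(r₁₃ + r₁₂)`. -/
theorem stmt1 {k A ι : Type*} [Field k] [Ring A] [Algebra k A] [Fintype ι]
    (lam : k) (u v : ι → A)
    (hWAYB : r13 u v * r12 u v - r12 u v * r23 u v + r23 u v * r13 u v
        - lam • r13 u v = (0 : (A ⊗[k] A) ⊗[k] A)) :
    (LinearMap.rTensor A (principalDeriv lam u v)) (∑ i, (u i) ⊗ₜ[k] (v i))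
        = -(r23 u v * r13 u v)
      ∧ (LinearMap.lTensor A (principalDeriv lam u v)) (∑ i, (u i) ⊗ₜ[k] (v i))
        = (TensorProduct.assoc k A A A)
            (r13 u v * r12 u v - lam • (r13 u v + r12 u v)) := by
  have h1312 : r13 u v * r12 u v = ∑ i, ∑ j, ((u i * u j) ⊗ₜ[k] (v j)) ⊗ₜ[k] (v i) := by
    simp [r13, r12, Finset.sum_mul_sum, Algebra.TensorProduct.tmul_mul_tmul]
  have h1223 : r12 u v * r23 u v = ∑ i, ∑ j, ((u i) ⊗ₜ[k] (v i * u j)) ⊗ₜ[k] (v j) := by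
    simp [r12, r23, Finset.sum_mul_sum, Algebra.TensorProduct.tmul_mul_tmul]
  have h2313 : r23 u v * r13 u v = ∑ i, ∑ j, ((u j) ⊗ₜ[k] (u i)) ⊗ₜ[k] (v i * v j) := by
    simp [r23, r13, Finset.sum_mul_sum, Algebra.TensorProduct.tmul_mul_tmul]
  constructor
  · have hL : (LinearMap.rTensor A (principalDeriv lam u v)) (∑ i, (u i) ⊗ₜ[k] (v i))
        = r13 u v * r12 u v - r12 u v * r23 u v - lam • r13 u v := by
      rw [h1312, h1223, Finset.sum_comm (f := fun i j => ((u i) ⊗ₜ[k] (v i * u j)) ⊗ₜ[k] (v j))]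
      simp [principalDeriv, LinearMap.rTensor, map_sum, sub_tmul, smul_tmul', r13,
        TensorProduct.sum_tmul, Finset.sum_sub_distrib, Finset.smul_sum]
    rw [hL, eq_neg_iff_add_eq_zero, ← hWAYB]
    abel
  · have hR : r13 (k := k) u v * r12 u v - lam • (r13 u v + r12 u v)
        = r12 u v * r23 u v - r23 u v * r13 u v - lam • r12 u v := by
      apply eq_of_sub_eq_zero
      rw [← hWAYB]
      module
    rw [hR]
    have hA : (TensorProduct.assoc k A A A)
        (r12 u v * r23 u v - r23 u v * r13 u v - lam • r12 u v)
        = (∑ i, ∑ j, (u i) ⊗ₜ[k] ((v i * u j) ⊗ₜ[k] (v j)))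
          - (∑ i, ∑ j, (u j) ⊗ₜ[k] ((u i) ⊗ₜ[k] (v i * v j)))
          - lam • ∑ i, (u i) ⊗ₜ[k] ((v i) ⊗ₜ[k] (1 : A)) := by
      rw [h1223, h2313]
      simp [r12, map_sum, map_sub, map_smul]
    rw [hA]
    rw [Finset.sum_comm (f := fun i j => (u j) ⊗ₜ[k] ((u i) ⊗ₜ[k] (v i * v j)))]
    simp [principalDeriv, LinearMap.lTensor, map_sum, tmul_sub, smul_tmul',
      TensorProduct.tmul_sum, tmul_smul, Finset.sum_sub_distrib, Finset.smul_sum]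
    simp [TensorProduct.smul_tmul]
end

section
/- Let (A, ·, 1, r) be a quasitriangular infinitesimal bialgebra of weight λ and M an A-bimodule. Define ψ : M → M ⊗ A by ψ(m) = Σᵢ (m◁uᵢ) ⊗ vᵢ − λ(m ⊗ 1). Then ψ is a right A-comodule structure on M: (id_M ⊗ Δ_r)∘ψ = (ψ ⊗ id_A)∘ψ, where Δ_r(a) = a·r − r·a − λ(a ⊗ 1). -/
open TensorProduct BigOperators

/-- `ψ(m) = Σᵢ (m ◁ uᵢ) ⊗ vᵢ − λ (m ⊗ 1)`. -/
noncomputable def psiMap {k A M ι : Type*} [Field k] [Ring A] [Algebra k A]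
    [AddCommGroup M] [Module k M] [Fintype ι] (lam : k) (u v : ι → A)
    (rAct : M →ₗ[k] A →ₗ[k] M) : M →ₗ[k] M ⊗[k] A :=
  (∑ i, ((TensorProduct.mk k M A).flip (v i)).comp (rAct.flip (u i)))
    - lam • ((TensorProduct.mk k M A).flip (1 : A))

/-- For a quasitriangular infinitesimal bialgebra `(A, r)` of weight `λ` and an
`A`-bimodule `M`, `ψ(m) = Σᵢ (m◁uᵢ) ⊗ vᵢ − λ(m⊗1)` is a right `A`-comodule
structure: `(id_M ⊗ Δ_r)∘ψ = (ψ ⊗ id_A)∘ψ`. -/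
theorem stmt2 {k A M ι : Type*} [Field k] [Ring A] [Algebra k A]
    [AddCommGroup M] [Module k M] [Fintype ι] (lam : k) (u v : ι → A)
    (lAct : A →ₗ[k] M →ₗ[k] M) (rAct : M →ₗ[k] A →ₗ[k] M)
    (hl : ∀ (x y : A) (m : M), lAct (x * y) m = lAct x (lAct y m))
    (hr : ∀ (m : M) (x y : A), rAct (rAct m x) y = rAct m (x * y))
    (hlr : ∀ (x : A) (m : M) (y : A), rAct (lAct x m) y = lAct x (rAct m y))
    (hWAYB : r13 u v * r12 u v - r12 u v * r23 u v + r23 u v * r13 u v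
        - lam • r13 u v = (0 : (A ⊗[k] A) ⊗[k] A)) :
    ∀ m : M,
      (TensorProduct.assoc k M A A)
          ((LinearMap.rTensor A (psiMap lam u v rAct)) (psiMap lam u v rAct m))
        = (LinearMap.lTensor M (principalDeriv lam u v)) (psiMap lam u v rAct m) := by
  intro m
  classical
  have h1 : r13 u v * r12 u v
      = ∑ i, ∑ j, ((u i * u j) ⊗ₜ[k] v j) ⊗ₜ[k] v i := by
    simp [r13, r12, Finset.sum_mul_sum, Algebra.TensorProduct.tmul_mul_tmul]
  have h2 : r12 u v * r23 u v
      = ∑ i, ∑ j, (u i ⊗ₜ[k] (v i * u j)) ⊗ₜ[k] v j := by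
    simp [r12, r23, Finset.sum_mul_sum, Algebra.TensorProduct.tmul_mul_tmul]
  have h3 : r23 u v * r13 u v
      = ∑ i, ∑ j, (u i ⊗ₜ[k] u j) ⊗ₜ[k] (v j * v i) := by
    rw [r23, r13, Finset.sum_mul_sum, Finset.sum_comm]
    simp [Algebra.TensorProduct.tmul_mul_tmul]
  rw [h1, h2, h3, r13] at hWAYB
  have key := congrArg (fun x => ((TensorProduct.assoc k M A A).toLinearMap.comp
      (LinearMap.rTensor A (LinearMap.rTensor A (rAct m)))) x) hWAYB
  simp only [map_sub, map_add, map_smul, map_sum,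
    LinearMap.coe_comp, Function.comp_apply, LinearMap.rTensor_tmul,
    LinearEquiv.coe_coe, TensorProduct.assoc_tmul, map_zero] at key
  simp only [psiMap, principalDeriv, LinearMap.sub_apply, LinearMap.sum_apply,
    LinearMap.smul_apply, LinearMap.coe_comp, Function.comp_apply,
    LinearMap.flip_apply, TensorProduct.mk_apply, map_sub, map_sum, map_smul,
    LinearMap.rTensor_tmul, LinearMap.lTensor_tmul, LinearEquiv.coe_coe,
    TensorProduct.assoc_tmul, LinearMap.mulRight_apply, LinearMap.mulLeft_apply,
    TensorProduct.tmul_sub, TensorProduct.tmul_sum, TensorProduct.tmul_smul,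
    TensorProduct.sub_tmul, TensorProduct.sum_tmul, ← TensorProduct.smul_tmul',
    one_mul, mul_one, Finset.sum_sub_distrib, ← Finset.smul_sum, hr]
  rw [← sub_eq_zero]
  conv_rhs => rw [← key]
  module
end

section
/- Let A and H be associative algebras forming a matched pair, i.e. H is an A-bimodule via ▷ : A⊗H→H, ◁ : H⊗A→H, A is an H-bimodule via ⇀ : H⊗A→A, ↼ : A⊗H→A, and conditions (AM1)–(AM6) hold. Then the bicrossed product A ⋈ H, the vector space A ⊕ H with multiplication (a,x)(b,y) = (ab + a↼y + x⇀b, a▷y + x◁b + xy), is an associative algebra. -/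
open TensorProduct BigOperators

/-- For a matched pair of associative algebras `(A, H, ▷, ◁, ⇀, ↼)`, the bicrossed
product multiplication `(a,x)(b,y) = (ab + a↼y + x⇀b, a▷y + x◁b + xy)` on
`A ⊕ H` is associative, i.e. `A ⋈ H` is an associative algebra. -/
theorem stmt5 {k A H : Type*} [Field k]
    [NonUnitalRing A] [Module k A] [NonUnitalRing H] [Module k H]
    -- actions: ▷ : A⊗H→H, ◁ : H⊗A→H, ⇀ : H⊗A→A, ↼ : A⊗H→A (bilinear)
    (trir : A →ₗ[k] H →ₗ[k] H) (tril : H →ₗ[k] A →ₗ[k] H)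
    (harpR : H →ₗ[k] A →ₗ[k] A) (harpL : A →ₗ[k] H →ₗ[k] A)
    -- (H, ▷, ◁) is an A-bimodule
    (hb1 : ∀ (a b : A) (x : H), trir (a * b) x = trir a (trir b x))
    (hb2 : ∀ (x : H) (a b : A), tril (tril x a) b = tril x (a * b))
    (hb3 : ∀ (a : A) (x : H) (b : A), tril (trir a x) b = trir a (tril x b))
    -- (A, ⇀, ↼) is an H-bimodule
    (hb4 : ∀ (x y : H) (a : A), harpR (x * y) a = harpR x (harpR y a))
    (hb5 : ∀ (a : A) (x y : H), harpL (harpL a x) y = harpL a (x * y))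
    (hb6 : ∀ (x : H) (a : A) (y : H), harpL (harpR x a) y = harpR x (harpL a y))
    -- (AM1) x⇀(ab) = (x⇀a)b + (x◁a)⇀b
    (hAM1 : ∀ (x : H) (a b : A), harpR x (a * b) = harpR x a * b + harpR (tril x a) b)
    -- (AM2) (ab)↼x = a(b↼x) + a↼(b▷x)
    (hAM2 : ∀ (a b : A) (x : H), harpL (a * b) x = a * harpL b x + harpL a (trir b x))
    -- (AM3) a▷(xy) = (a↼x)▷y + (a▷x)y
    (hAM3 : ∀ (a : A) (x y : H), trir a (x * y) = trir (harpL a x) y + trir a x * y)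
    -- (AM4) (xy)◁a = x◁(y⇀a) + x(y◁a)
    (hAM4 : ∀ (x y : H) (a : A), tril (x * y) a = tril x (harpR y a) + x * tril y a)
    -- (AM5) a(x⇀b) + a↼(x◁b) = (a↼x)b + (a▷x)⇀b
    (hAM5 : ∀ (a : A) (x : H) (b : A),
      a * harpR x b + harpL a (tril x b) = harpL a x * b + harpR (trir a x) b)
    -- (AM6) x◁(a↼y) + x(a▷y) = (x⇀a)▷y + (x◁a)y
    (hAM6 : ∀ (x : H) (a : A) (y : H),
      tril x (harpL a y) + x * trir a y = trir (harpR x a) y + tril x a * y) :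
    ∀ p q r : A × H,
      (((p.1 * q.1 + harpL p.1 q.2 + harpR p.2 q.1,
          trir p.1 q.2 + tril p.2 q.1 + p.2 * q.2) : A × H).1 * r.1
          + harpL (p.1 * q.1 + harpL p.1 q.2 + harpR p.2 q.1) r.2
          + harpR (trir p.1 q.2 + tril p.2 q.1 + p.2 * q.2) r.1,
        trir (p.1 * q.1 + harpL p.1 q.2 + harpR p.2 q.1) r.2
          + tril (trir p.1 q.2 + tril p.2 q.1 + p.2 * q.2) r.1
          + (trir p.1 q.2 + tril p.2 q.1 + p.2 * q.2) * r.2)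
      = (p.1 * (q.1 * r.1 + harpL q.1 r.2 + harpR q.2 r.1)
          + harpL p.1 (trir q.1 r.2 + tril q.2 r.1 + q.2 * r.2)
          + harpR p.2 (q.1 * r.1 + harpL q.1 r.2 + harpR q.2 r.1),
        trir p.1 (trir q.1 r.2 + tril q.2 r.1 + q.2 * r.2)
          + tril p.2 (q.1 * r.1 + harpL q.1 r.2 + harpR q.2 r.1)
          + p.2 * (trir q.1 r.2 + tril q.2 r.1 + q.2 * r.2)) := by
  rintro ⟨a, x⟩ ⟨b, y⟩ ⟨c, z⟩
  have h5 : harpR (trir a y) c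
      = a * harpR y c + harpL a (tril y c) - harpL a y * c := by
    rw [eq_sub_iff_add_eq, add_comm]; exact (hAM5 a y c).symm
  have h6 : trir (harpR x b) z
      = tril x (harpL b z) + x * trir b z - tril x b * z := by
    rw [eq_sub_iff_add_eq]; exact (hAM6 x b z).symm
  simp only [map_add, LinearMap.add_apply, mul_add, add_mul, mul_assoc,
    hb1, hb2, hb3, hb4, hb5, hb6, hAM1, hAM2, hAM3, hAM4, h5, h6,
    Prod.mk.injEq]
  constructor <;> abel
end

section
/- Let (A, Δ_A) and (H, Δ_H) be coassociative coalgebras forming a matched pair of coalgebras via φ : A → H⊗A, ψ : A → A⊗H, ρ : H → A⊗H, γ : H → H⊗A satisfying the bicomodule axioms and conditions (CM1)–(CM6). Then the bicrossed coproduct A ⧓ H, the vector space A ⊕ H with comultiplication Δ_E(a) = Δ_A(a) + φ(a) + ψ(a) and Δ_E(x) = Δ_H(x) + ρ(x) + γ(x), is a coassociative coalgebra. -/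
open TensorProduct BigOperators


section Aux
variable {k M N P X Y : Type*} [Field k] [AddCommGroup M] [Module k M]
  [AddCommGroup N] [Module k N] [AddCommGroup P] [Module k P]
  [AddCommGroup X] [Module k X] [AddCommGroup Y] [Module k Y]

lemma rT_map' (f : M →ₗ[k] P) (u : X →ₗ[k] M) (v : Y →ₗ[k] N) (t : X ⊗[k] Y) :
    LinearMap.rTensor N f (TensorProduct.map u v t) = TensorProduct.map (f ∘ₗ u) v t := by
  rw [show TensorProduct.map (f ∘ₗ u) v = LinearMap.rTensor N f ∘ₗ TensorProduct.map u v from by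
    rw [LinearMap.rTensor, ← TensorProduct.map_comp]; simp]
  rfl

lemma lT_map' (f : N →ₗ[k] P) (u : X →ₗ[k] M) (v : Y →ₗ[k] N) (t : X ⊗[k] Y) :
    LinearMap.lTensor M f (TensorProduct.map u v t) = TensorProduct.map u (f ∘ₗ v) t := by
  rw [show TensorProduct.map u (f ∘ₗ v) = LinearMap.lTensor M f ∘ₗ TensorProduct.map u v from by
    rw [LinearMap.lTensor, ← TensorProduct.map_comp]; simp]
  rfl

lemma map_compL (g : M →ₗ[k] P) (f : X →ₗ[k] M) (v : Y →ₗ[k] N) (t : X ⊗[k] Y) :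
    TensorProduct.map (g ∘ₗ f) v t = TensorProduct.map g v (LinearMap.rTensor Y f t) := by
  rw [show TensorProduct.map (g ∘ₗ f) v = TensorProduct.map g v ∘ₗ LinearMap.rTensor Y f from by
    rw [LinearMap.rTensor, ← TensorProduct.map_comp]; simp]
  rfl

lemma map_compR (g : N →ₗ[k] P) (u : X →ₗ[k] M) (f : Y →ₗ[k] N) (t : X ⊗[k] Y) :
    TensorProduct.map u (g ∘ₗ f) t = TensorProduct.map u g (LinearMap.lTensor X f t) := by
  rw [show TensorProduct.map u (g ∘ₗ f) = TensorProduct.map u g ∘ₗ LinearMap.lTensor X f from by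
    rw [LinearMap.lTensor, ← TensorProduct.map_comp]; simp]
  rfl
end Aux


/-- The bicrossed coproduct comultiplication on `A ⊕ H`:
`Δ_E(a) = Δ_A(a) + φ(a) + ψ(a)`, `Δ_E(x) = Δ_H(x) + ρ(x) + γ(x)`. -/
noncomputable def bicrossedCoprod {k A H : Type*} [Field k]
    [AddCommGroup A] [Module k A] [AddCommGroup H] [Module k H]
    (dA : A →ₗ[k] A ⊗[k] A) (dH : H →ₗ[k] H ⊗[k] H)
    (φ : A →ₗ[k] H ⊗[k] A) (ψ : A →ₗ[k] A ⊗[k] H)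
    (ρ : H →ₗ[k] A ⊗[k] H) (γ : H →ₗ[k] H ⊗[k] A) :
    (A × H) →ₗ[k] (A × H) ⊗[k] (A × H) :=
  (TensorProduct.map (LinearMap.inl k A H) (LinearMap.inl k A H)).comp
      (dA.comp (LinearMap.fst k A H))
    + (TensorProduct.map (LinearMap.inr k A H) (LinearMap.inl k A H)).comp
      (φ.comp (LinearMap.fst k A H))
    + (TensorProduct.map (LinearMap.inl k A H) (LinearMap.inr k A H)).comp
      (ψ.comp (LinearMap.fst k A H))
    + (TensorProduct.map (LinearMap.inr k A H) (LinearMap.inr k A H)).comp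
      (dH.comp (LinearMap.snd k A H))
    + (TensorProduct.map (LinearMap.inl k A H) (LinearMap.inr k A H)).comp
      (ρ.comp (LinearMap.snd k A H))
    + (TensorProduct.map (LinearMap.inr k A H) (LinearMap.inl k A H)).comp
      (γ.comp (LinearMap.snd k A H))

/-- For a matched pair of coalgebras `(A, H, φ, ψ, ρ, γ)`, the bicrossed coproduct
`A ⧓ H` is a coassociative coalgebra. -/
theorem stmt6 {k A H : Type*} [Field k]
    [AddCommGroup A] [Module k A] [AddCommGroup H] [Module k H]
    (dA : A →ₗ[k] A ⊗[k] A) (dH : H →ₗ[k] H ⊗[k] H)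
    (φ : A →ₗ[k] H ⊗[k] A) (ψ : A →ₗ[k] A ⊗[k] H)
    (ρ : H →ₗ[k] A ⊗[k] H) (γ : H →ₗ[k] H ⊗[k] A)
    -- coassociativity of Δ_A and Δ_H
    (hcoA : ∀ a : A, (TensorProduct.assoc k A A A) ((LinearMap.rTensor A dA) (dA a))
      = (LinearMap.lTensor A dA) (dA a))
    (hcoH : ∀ x : H, (TensorProduct.assoc k H H H) ((LinearMap.rTensor H dH) (dH x))
      = (LinearMap.lTensor H dH) (dH x))
    -- A is an H-bicomodule via (φ, ψ)
    (hbc1 : ∀ a : A, (TensorProduct.assoc k H H A) ((LinearMap.rTensor A dH) (φ a))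
      = (LinearMap.lTensor H φ) (φ a))
    (hbc2 : ∀ a : A, (LinearMap.lTensor A dH) (ψ a)
      = (TensorProduct.assoc k A H H) ((LinearMap.rTensor H ψ) (ψ a)))
    (hbc3 : ∀ a : A, (LinearMap.lTensor H ψ) (φ a)
      = (TensorProduct.assoc k H A H) ((LinearMap.rTensor H φ) (ψ a)))
    -- H is an A-bicomodule via (ρ, γ)
    (hbc4 : ∀ x : H, (TensorProduct.assoc k A A H) ((LinearMap.rTensor H dA) (ρ x))
      = (LinearMap.lTensor A ρ) (ρ x))
    (hbc5 : ∀ x : H, (LinearMap.lTensor H dA) (γ x)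
      = (TensorProduct.assoc k H A A) ((LinearMap.rTensor A γ) (γ x)))
    (hbc6 : ∀ x : H, (LinearMap.lTensor A γ) (ρ x)
      = (TensorProduct.assoc k A H A) ((LinearMap.rTensor A ρ) (γ x)))
    -- (CM1) a₍₋₁₎⊗Δ_A(a₍₀₎) = φ(a₁)⊗a₂ + γ(a₍₋₁₎)⊗a₍₀₎
    (hCM1 : ∀ a : A, (LinearMap.lTensor H dA) (φ a)
      = (TensorProduct.assoc k H A A)
          ((LinearMap.rTensor A φ) (dA a) + (LinearMap.rTensor A γ) (φ a)))
    -- (CM2) Δ_A(a₍₀₎)⊗a₍₁₎ = a₁⊗ψ(a₂) + a₍₀₎⊗ρ(a₍₁₎)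
    (hCM2 : ∀ a : A, (TensorProduct.assoc k A A H) ((LinearMap.rTensor H dA) (ψ a))
      = (LinearMap.lTensor A ψ) (dA a) + (LinearMap.lTensor A ρ) (ψ a))
    -- (CM3) x₍₋₁₎⊗Δ_H(x₍₀₎) = ρ(x₁)⊗x₂ + ψ(x₍₋₁₎)⊗x₍₀₎
    (hCM3 : ∀ x : H, (LinearMap.lTensor A dH) (ρ x)
      = (TensorProduct.assoc k A H H)
          ((LinearMap.rTensor H ρ) (dH x) + (LinearMap.rTensor H ψ) (ρ x)))
    -- (CM4) Δ_H(x₍₀₎)⊗x₍₁₎ = x₍₀₎⊗φ(x₍₁₎) + x₁⊗γ(x₂)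
    (hCM4 : ∀ x : H, (TensorProduct.assoc k H H A) ((LinearMap.rTensor A dH) (γ x))
      = (LinearMap.lTensor H φ) (γ x) + (LinearMap.lTensor H γ) (dH x))
    -- (CM5) a₁⊗φ(a₂) + a₍₀₎⊗γ(a₍₁₎) = ψ(a₁)⊗a₂ + ρ(a₍₋₁₎)⊗a₍₀₎
    (hCM5 : ∀ a : A, (LinearMap.lTensor A φ) (dA a) + (LinearMap.lTensor A γ) (ψ a)
      = (TensorProduct.assoc k A H A)
          ((LinearMap.rTensor A ψ) (dA a) + (LinearMap.rTensor A ρ) (φ a)))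
    -- (CM6) x₁⊗ρ(x₂) + x₍₀₎⊗ψ(x₍₁₎) = φ(x₍₋₁₎)⊗x₍₀₎ + γ(x₁)⊗x₂
    (hCM6 : ∀ x : H, (LinearMap.lTensor H ρ) (dH x) + (LinearMap.lTensor H ψ) (γ x)
      = (TensorProduct.assoc k H A H)
          ((LinearMap.rTensor H φ) (ρ x) + (LinearMap.rTensor H γ) (dH x))) :
    ∀ e : A × H,
      (TensorProduct.assoc k (A × H) (A × H) (A × H))
          ((LinearMap.rTensor (A × H) (bicrossedCoprod dA dH φ ψ ρ γ))
            (bicrossedCoprod dA dH φ ψ ρ γ e))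
        = (LinearMap.lTensor (A × H) (bicrossedCoprod dA dH φ ψ ρ γ))
            (bicrossedCoprod dA dH φ ψ ρ γ e) := by
  intro e
  have hΔa : ∀ a : A, bicrossedCoprod dA dH φ ψ ρ γ ((a, 0) : A × H)
      = TensorProduct.map (LinearMap.inl k A H) (LinearMap.inl k A H) (dA a)
      + TensorProduct.map (LinearMap.inr k A H) (LinearMap.inl k A H) (φ a)
      + TensorProduct.map (LinearMap.inl k A H) (LinearMap.inr k A H) (ψ a) := by
    intro a; simp [bicrossedCoprod]
  have hΔx : ∀ x : H, bicrossedCoprod dA dH φ ψ ρ γ ((0, x) : A × H)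
      = TensorProduct.map (LinearMap.inr k A H) (LinearMap.inr k A H) (dH x)
      + TensorProduct.map (LinearMap.inl k A H) (LinearMap.inr k A H) (ρ x)
      + TensorProduct.map (LinearMap.inr k A H) (LinearMap.inl k A H) (γ x) := by
    intro x; simp [bicrossedCoprod]
  have hΔinl : bicrossedCoprod dA dH φ ψ ρ γ ∘ₗ LinearMap.inl k A H
      = TensorProduct.map (LinearMap.inl k A H) (LinearMap.inl k A H) ∘ₗ dA
      + TensorProduct.map (LinearMap.inr k A H) (LinearMap.inl k A H) ∘ₗ φ
      + TensorProduct.map (LinearMap.inl k A H) (LinearMap.inr k A H) ∘ₗ ψ := by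
    ext a; simp [bicrossedCoprod]
  have hΔinr : bicrossedCoprod dA dH φ ψ ρ γ ∘ₗ LinearMap.inr k A H
      = TensorProduct.map (LinearMap.inr k A H) (LinearMap.inr k A H) ∘ₗ dH
      + TensorProduct.map (LinearMap.inl k A H) (LinearMap.inr k A H) ∘ₗ ρ
      + TensorProduct.map (LinearMap.inr k A H) (LinearMap.inl k A H) ∘ₗ γ := by
    ext x; simp [bicrossedCoprod]
  have key1 : ∀ a : A,
      (TensorProduct.assoc k (A × H) (A × H) (A × H))
          ((LinearMap.rTensor (A × H) (bicrossedCoprod dA dH φ ψ ρ γ))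
            (bicrossedCoprod dA dH φ ψ ρ γ ((a, 0) : A × H)))
        = (LinearMap.lTensor (A × H) (bicrossedCoprod dA dH φ ψ ρ γ))
            (bicrossedCoprod dA dH φ ψ ρ γ ((a, 0) : A × H)) := by
    intro a
    rw [hΔa]
    simp only [map_add, rT_map', lT_map', hΔinl, hΔinr,
      TensorProduct.map_add_left, TensorProduct.map_add_right, LinearMap.add_apply,
      map_compL, map_compR, ← TensorProduct.map_map_assoc]
    rw [hcoA a, hbc1 a, ← hbc2 a, ← hbc3 a, hCM1 a, hCM2 a]
    have h5 := congrArg (TensorProduct.map (LinearMap.inl k A H)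
      (TensorProduct.map (LinearMap.inr k A H) (LinearMap.inl k A H))) (hCM5 a)
    simp only [map_add] at h5 ⊢
    have h6 : (TensorProduct.map (LinearMap.inl k A H)
          (TensorProduct.map (LinearMap.inr k A H) (LinearMap.inl k A H)))
          ((TensorProduct.assoc k A H A) ((LinearMap.rTensor A ψ) (dA a)))
        = (TensorProduct.map (LinearMap.inl k A H)
            (TensorProduct.map (LinearMap.inr k A H) (LinearMap.inl k A H)))
            ((LinearMap.lTensor A φ) (dA a))
          + (TensorProduct.map (LinearMap.inl k A H)
            (TensorProduct.map (LinearMap.inr k A H) (LinearMap.inl k A H)))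
            ((LinearMap.lTensor A γ) (ψ a))
          - (TensorProduct.map (LinearMap.inl k A H)
            (TensorProduct.map (LinearMap.inr k A H) (LinearMap.inl k A H)))
            ((TensorProduct.assoc k A H A) ((LinearMap.rTensor A ρ) (φ a))) := by
      rw [eq_sub_iff_add_eq]; exact h5.symm
    rw [h6]
    abel
  have key2 : ∀ x : H,
      (TensorProduct.assoc k (A × H) (A × H) (A × H))
          ((LinearMap.rTensor (A × H) (bicrossedCoprod dA dH φ ψ ρ γ))
            (bicrossedCoprod dA dH φ ψ ρ γ ((0, x) : A × H)))
        = (LinearMap.lTensor (A × H) (bicrossedCoprod dA dH φ ψ ρ γ))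
            (bicrossedCoprod dA dH φ ψ ρ γ ((0, x) : A × H)) := by
    intro x
    rw [hΔx]
    simp only [map_add, rT_map', lT_map', hΔinl, hΔinr,
      TensorProduct.map_add_left, TensorProduct.map_add_right, LinearMap.add_apply,
      map_compL, map_compR, ← TensorProduct.map_map_assoc]
    rw [hcoH x, hbc4 x, ← hbc5 x, ← hbc6 x, hCM3 x, hCM4 x]
    have h5 := congrArg (TensorProduct.map (LinearMap.inr k A H)
      (TensorProduct.map (LinearMap.inl k A H) (LinearMap.inr k A H))) (hCM6 x)
    simp only [map_add] at h5 ⊢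
    have h6 : (TensorProduct.map (LinearMap.inr k A H)
          (TensorProduct.map (LinearMap.inl k A H) (LinearMap.inr k A H)))
          ((TensorProduct.assoc k H A H) ((LinearMap.rTensor H φ) (ρ x)))
        = (TensorProduct.map (LinearMap.inr k A H)
            (TensorProduct.map (LinearMap.inl k A H) (LinearMap.inr k A H)))
            ((LinearMap.lTensor H ρ) (dH x))
          + (TensorProduct.map (LinearMap.inr k A H)
            (TensorProduct.map (LinearMap.inl k A H) (LinearMap.inr k A H)))
            ((LinearMap.lTensor H ψ) (γ x))
          - (TensorProduct.map (LinearMap.inr k A H)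
            (TensorProduct.map (LinearMap.inl k A H) (LinearMap.inr k A H)))
            ((TensorProduct.assoc k H A H) ((LinearMap.rTensor H γ) (dH x))) := by
      rw [eq_sub_iff_add_eq]; exact h5.symm
    rw [h6]
    abel
  have he : e = ((e.1, 0) : A × H) + ((0, e.2) : A × H) := by ext <;> simp
  rw [he]
  simp only [map_add]
  rw [key1 e.1, key2 e.2]
end

section
/- Let A be an algebra, E a vector space containing A as a subspace with projection p: E→A, and V = ker(p). Suppose E carries an algebra structure such that V is a subalgebra of E and p is an algebra homomorphism. Define x◁a = x·_E a, a▷x = a·_E x, θ(a,b) = a·_E b − p(a·_E b), x·_V y = x·_E y. Then these maps form an extending datum of type (a1) and the map φ: A#_θV → E, φ(a,x) = a + x, is an algebra isomorphism. -/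
open TensorProduct BigOperators

/-- Let `A` be an algebra, `E` an algebra containing `A` as a subspace (via the
linear inclusion `i`), `p : E → A` a projection which is an algebra homomorphism
and such that `V = ker p` is a subalgebra of `E`.  With
`x◁a = x·_E a`, `a▷x = a·_E x`, `θ(a,b) = a·_E b − p(a·_E b)` and `x·_V y = x·_E y`,
these maps form an extending datum of type (a1) (all results of the structure maps
land in `V`), and `φ : A #_θ V → E`, `φ(a,x) = a + x` is an algebra isomorphism. -/
theorem stmt11 {k A E : Type*} [Field k]
    [NonUnitalRing A] [Module k A] [NonUnitalRing E] [Module k E]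
    (i : A →ₗ[k] E) (p : E →ₗ[k] A)
    (hpi : ∀ a : A, p (i a) = a)
    (hpmul : ∀ e f : E, p (e * f) = p e * p f)
    (hV : ∀ x y : E, x ∈ LinearMap.ker p → y ∈ LinearMap.ker p
      → x * y ∈ LinearMap.ker p) :
    -- the structure maps land in V = ker p (extending datum of type (a1))
    (∀ (x : LinearMap.ker p) (a : A), (x : E) * i a ∈ LinearMap.ker p)
    ∧ (∀ (a : A) (x : LinearMap.ker p), i a * (x : E) ∈ LinearMap.ker p)
    ∧ (∀ a b : A, i a * i b - i (p (i a * i b)) ∈ LinearMap.ker p)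
    -- φ(a,x) = a + x is bijective
    ∧ Function.Bijective (fun w : A × LinearMap.ker p => i w.1 + (w.2 : E))
    -- φ is multiplicative for the unified product
    -- (a,x)(b,y) = (ab, x·y + x◁b + a▷y + θ(a,b))
    ∧ (∀ (a b : A) (x y : LinearMap.ker p),
        i (a * b)
          + ((x : E) * (y : E) + (x : E) * i b + i a * (y : E)
              + (i a * i b - i (p (i a * i b))))
        = (i a + (x : E)) * (i b + (y : E))) := by
  refine ⟨?_, ?_, ?_, ⟨?_, ?_⟩, ?_⟩
  · intro x a
    simp [LinearMap.mem_ker, hpmul, x.2.out]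
  · intro a x
    simp [LinearMap.mem_ker, hpmul, x.2.out]
  · intro a b
    simp [LinearMap.mem_ker, hpi]
  · rintro ⟨a, x⟩ ⟨b, y⟩ h
    simp only at h
    have h2 : p (i a + (x : E)) = p (i b + (y : E)) := by rw [h]
    simp [hpi, x.2.out, y.2.out] at h2
    subst h2
    have : (x : E) = (y : E) := by
      have := congrArg (fun t => t - i a) h
      simpa using this
    exact Prod.ext rfl (Subtype.ext this)
  · intro e
    refine ⟨⟨p e, ⟨e - i (p e), ?_⟩⟩, ?_⟩
    · simp [LinearMap.mem_ker, hpi]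
    · simp
  · intro a b x y
    have : p (i a * i b) = a * b := by rw [hpmul, hpi, hpi]
    rw [this]
    rw [add_mul, mul_add, mul_add]
    abel
end

section
/- Let (A, ·, 1, r) be a quasitriangular infinitesimal bialgebra of weight λ and M an A-bimodule with ψ(m) = Σᵢ(m◁uᵢ)⊗vᵢ − λ(m⊗1). Then the right Hopf module condition holds: ψ(m◁a) = (m◁Δ_r(a)) + ψ(m)·a + λ(m⊗a) in the sense that ψ(m◁a) = Σ (m◁a₁)⊗a₂ + m₍₀₎⊗m₍₁₎a + λ(m⊗a), where Δ_r(a) = a₁⊗a₂ = Σᵢ(auᵢ⊗vᵢ − uᵢ⊗vᵢa) − λ(a⊗1) and ψ(m) = m₍₀₎⊗m₍₁₎. -/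
open TensorProduct BigOperators

/-- For a quasitriangular infinitesimal bialgebra `(A, r)` of weight `λ` and an
`A`-bimodule `M`, the right Hopf module condition holds:
`ψ(m◁a) = (m◁a₁)⊗a₂ + m₍₀₎⊗m₍₁₎a + λ(m⊗a)`. -/
theorem stmt18 {k A M ι : Type*} [Field k] [Ring A] [Algebra k A]
    [AddCommGroup M] [Module k M] [Fintype ι] (lam : k) (u v : ι → A)
    (lAct : A →ₗ[k] M →ₗ[k] M) (rAct : M →ₗ[k] A →ₗ[k] M)
    (hl : ∀ (x y : A) (m : M), lAct (x * y) m = lAct x (lAct y m))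
    (hr : ∀ (m : M) (x y : A), rAct (rAct m x) y = rAct m (x * y))
    (hlr : ∀ (x : A) (m : M) (y : A), rAct (lAct x m) y = lAct x (rAct m y))
    (hWAYB : r13 u v * r12 u v - r12 u v * r23 u v + r23 u v * r13 u v
        - lam • r13 u v = (0 : (A ⊗[k] A) ⊗[k] A)) :
    ∀ (m : M) (a : A),
      psiMap lam u v rAct (rAct m a)
        = (TensorProduct.map (rAct m) (LinearMap.id : A →ₗ[k] A))
            (principalDeriv lam u v a)
          + (LinearMap.lTensor M (LinearMap.mulRight k a)) (psiMap lam u v rAct m)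
          + lam • (m ⊗ₜ[k] a) := by
  intro m a
  simp only [psiMap, principalDeriv, LinearMap.sub_apply, LinearMap.sum_apply,
    LinearMap.comp_apply, LinearMap.smul_apply, LinearMap.flip_apply,
    TensorProduct.mk_apply, LinearMap.mulRight_apply, LinearMap.mulLeft_apply,
    map_sub, map_sum, map_smul, TensorProduct.map_tmul, LinearMap.lTensor_tmul,
    LinearMap.id_apply, TensorProduct.smul_tmul', one_mul, hr]
  abel
end
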